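/- Let A = !![a, b; c, d] be a 2×2 real matrix with trace zero and strictly negative determinant. Then the special geodesic S_A = {z ∈ ℍ : (a·z + b)/(c·z + d) = conj z} is an infinite set (in particular, nonempty). -/

import Mathlib

open Matrix Complex ComplexConjugate

/-!
For trace-zero `A`, clearing the denominator in `(a z + b)/(c z - a) = z̄` leaves the real equation
`c |z|² = 2 a Re z + b`: a vertical line when `c = 0`, otherwise a circle centred on the real axis.
For a fixed height `y > 0` it is a quadratic in `Re z` of discriminant `4 (b c - a d - c² y²)`, which
is positive for all small `y` because `det A < 0`. Hence every sufficiently small height is attained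
on `S_A`, and `S_A` is infinite.
-/

open Filter Topology

theorem exists_quadratic_eq_zero_of_discrim_pos {a b c : ℝ} (h : 0 < discrim a b c) :
    ∃ x, a * (x * x) + b * x + c = 0 := by
  rcases eq_or_ne a 0 with rfl | ha
  · have hb : b ≠ 0 := by rintro rfl; simp [discrim] at h
    exact ⟨-c / b, by field_simp; ring⟩
  · exact exists_quadratic_eq_zero ha ⟨√(discrim a b c), (Real.mul_self_sqrt h.le).symm⟩

lemma ofReal_mul_add_ofReal_ne_zero {c d : ℝ} {z : ℂ} (hz : 0 < z.im) (hcd : c ≠ 0 ∨ d ≠ 0) :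
    (c : ℂ) * z + d ≠ 0 := by
  intro h
  have him : c * z.im = 0 := by simpa using congrArg Complex.im h
  have hc : c = 0 := (mul_eq_zero.1 him).resolve_right hz.ne'
  have hd : d = 0 := by simpa [hc] using h
  exact hcd.elim (· hc) (· hd)

def specialGeodesic (a b c d : ℝ) : Set ℂ :=
  {z : ℂ | 0 < z.im ∧ ((a : ℂ) * z + (b : ℂ)) / ((c : ℂ) * z + (d : ℂ)) = conj z}

section

variable {a b c d : ℝ}

lemma mobius_eq_conj_iff (htrace : a + d = 0) {z : ℂ} (hden : (c : ℂ) * z + d ≠ 0) :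
    ((a : ℂ) * z + b) / (c * z + d) = conj z ↔ c * (z.re * z.re + z.im * z.im) = 2 * a * z.re + b := by
  have hd : d = -a := by linarith
  subst hd
  rw [div_eq_iff hden, Complex.ext_iff]
  simp only [add_re, add_im, mul_re, mul_im, ofReal_re, ofReal_im, conj_re, conj_im]
  constructor
  · rintro ⟨hre, -⟩; linarith
  · intro h; constructor <;> linarith

lemma mem_im_image_specialGeodesic (htrace : a + d = 0) (hdet : a * d - b * c < 0) {y : ℝ}
    (hy : 0 < y) (hsmall : c ^ 2 * y ^ 2 < b * c - a * d) :
    y ∈ Complex.im '' specialGeodesic a b c d := by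
  have hdisc : 0 < discrim c (-2 * a) (c * y ^ 2 - b) := by
    have had : a * a = -(a * d) := by linear_combination a * htrace
    rw [discrim]; nlinarith
  obtain ⟨x, hx⟩ := exists_quadratic_eq_zero_of_discrim_pos hdisc
  have hcd : c ≠ 0 ∨ d ≠ 0 := by
    by_contra! h; obtain ⟨rfl, rfl⟩ := h; simp at hdet
  have hden := ofReal_mul_add_ofReal_ne_zero (z := x + y * I) (by simpa using hy) hcd
  refine ⟨x + y * I, ⟨by simpa using hy, (mobius_eq_conj_iff htrace hden).2 ?_⟩, by simp⟩
  simp only [add_re, add_im, ofReal_re, ofReal_im, mul_re, mul_im, I_re, I_im]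
  linarith

theorem specialGeodesic_infinite (htrace : a + d = 0) (hdet : a * d - b * c < 0) :
    (specialGeodesic a b c d).Infinite := by
  have hsmall : ∀ᶠ y in 𝓝 (0 : ℝ), c ^ 2 * y ^ 2 < b * c - a * d :=
    (show Continuous fun y : ℝ => c ^ 2 * y ^ 2 by fun_prop).continuousAt.eventually_lt
      continuousAt_const (by simpa using hdet)
  have him : Complex.im '' specialGeodesic a b c d ∈ 𝓝[>] (0 : ℝ) := by
    filter_upwards [nhdsWithin_le_nhds hsmall, self_mem_nhdsWithin] with y hy hy0
    exact mem_im_image_specialGeodesic htrace hdet hy0 hy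
  obtain ⟨ε, hε, hsub⟩ := mem_nhdsGT_iff_exists_Ioo_subset.1 him
  exact ((Set.Ioo_infinite hε).mono hsub).of_image _

end

/-- For `A = !![a, b; c, d]` real with trace zero and strictly negative
determinant, the special geodesic `S_A` is an infinite set (in particular, nonempty). -/
theorem special_geodesic_infinite
    (a b c d : ℝ) (A : Matrix (Fin 2) (Fin 2) ℝ)
    (hA : A = !![a, b; c, d]) (htrace : a + d = 0) (hdet : A.det < 0) :
    {z : ℂ | 0 < z.im ∧ ((a : ℂ) * z + (b : ℂ)) / ((c : ℂ) * z + (d : ℂ)) = conj z}.Infinite ∧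
    {z : ℂ | 0 < z.im ∧ ((a : ℂ) * z + (b : ℂ)) / ((c : ℂ) * z + (d : ℂ)) = conj z}.Nonempty := by
  subst hA
  rw [det_fin_two_of] at hdet
  have h := specialGeodesic_infinite htrace hdet
  exact ⟨h, h.nonempty⟩
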